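/- Let (Ω,Σ) be a measurable space, and let 𝔭, 𝔮 be probability measures on Ω with 𝔭 ≪ 𝔮 and H := H(𝔭|𝔮) < ∞. Let u : Ω → (0,∞) be measurable and suppose there exists s > 0 with ∫ u^{−s} d𝔮 < ∞. Then the negative part (log u)⁻ := max(−log u, 0) belongs to L¹(𝔭), and ∫ (log u)⁻ d𝔭 ≤ 2·e^{H−1} · max( 1/s, log₂( 1 + (1 + ‖u^{−1}‖_{L^s(𝔮)}^{s})^{1/s} ) ). -/

import Mathlib

/-!
Write `f = (log u)⁻`. Pointwise `e^{s f} ≤ 1 + u^{-s}`, so `e^{s f}` is `𝔮`-integrable with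
`∫ e^{s f} d𝔮 ≤ 1 + ‖u⁻¹‖_s^s`. Young's inequality `a b ≤ a log a - a + e^b` applied to
`a = d𝔭/d𝔮` dominates `(d𝔭/d𝔮) · s f` by a `𝔮`-integrable function, hence `f ∈ L¹(𝔭)`, and the
Donsker–Varadhan inequality `∫ g d𝔭 ≤ H + log ∫ e^g d𝔮` gives `s ∫ f d𝔭 ≤ H + log (1 + ‖u⁻¹‖_s^s)`.
The stated bound follows from `H ≥ 0` (Gibbs) and `H + log 2 ≤ 2 e^{H-1}`.
-/

open MeasureTheory Real InformationTheory

lemma Real.mul_le_klFun_add_exp_sub_one {a : ℝ} (ha : 0 ≤ a) (b : ℝ) :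
    a * b ≤ klFun a + exp b - 1 := by
  rw [klFun_apply]
  rcases ha.eq_or_lt with rfl | ha
  · simp [(exp_pos b).le]
  · have h := mul_le_mul_of_nonneg_left (add_one_le_exp (b - log a)) ha.le
    rw [exp_sub, exp_log ha, mul_div_cancel₀ _ ha.ne'] at h
    nlinarith

lemma Real.add_log_two_le_two_mul_exp_sub_one (x : ℝ) : x + log 2 ≤ 2 * exp (x - 1) := by
  have h := add_one_le_exp (x - 1 + log 2)
  rw [exp_add, exp_log two_pos] at h
  linarith

lemma Real.exp_mul_max_neg_log_le_one_add_rpow_neg {u : ℝ} (hu : 0 < u) (s : ℝ) :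
    exp (s * max (-log u) 0) ≤ 1 + u ^ (-s) := by
  have hpow : exp (s * -log u) = u ^ (-s) := by
    rw [rpow_def_of_pos hu]; ring_nf
  rcases le_total (-log u) 0 with h | h
  · rw [max_eq_right h, mul_zero, exp_zero]
    linarith [rpow_pos_of_pos hu (-s)]
  · rw [max_eq_left h, hpow]
    linarith

lemma Real.div_add_log_le_two_mul_exp_mul_max {H s K : ℝ} (hH : 0 ≤ H) (hs : 0 < s)
    (hK : 0 < K) :
    (H + log K) / s ≤ 2 * exp (H - 1) * max (1 / s) (logb 2 (1 + K ^ (1 / s))) := by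
  set A := max (1 / s) (logb 2 (1 + K ^ (1 / s)))
  have hA : 0 ≤ A := (one_div_pos.mpr hs).le.trans (le_max_left _ _)
  have hlogb : logb 2 (K ^ (1 / s)) ≤ A :=
    (logb_le_logb_of_le one_lt_two (rpow_pos_of_pos hK _) (by linarith)).trans
      (le_max_right _ _)
  have hsplit : (H + log K) / s = H * (1 / s) + logb 2 (K ^ (1 / s)) * log 2 := by
    rw [logb, log_rpow hK]
    field_simp
  calc (H + log K) / s = H * (1 / s) + logb 2 (K ^ (1 / s)) * log 2 := hsplit
    _ ≤ H * A + A * log 2 := by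
      gcongr
      exact le_max_left _ _
    _ = A * (H + log 2) := by ring
    _ ≤ A * (2 * exp (H - 1)) := by gcongr; exact add_log_two_le_two_mul_exp_sub_one H
    _ = 2 * exp (H - 1) * A := by ring

namespace MeasureTheory

variable {Ω : Type*} [MeasurableSpace Ω] {μ ν : Measure Ω} {g : Ω → ℝ}

lemma integrable_of_integrable_exp_of_nonneg [IsFiniteMeasure μ] [IsFiniteMeasure ν]
    (hμν : μ ≪ ν) (h_int : Integrable (llr μ ν) μ) (hg : 0 ≤ g)
    (hexp : Integrable (fun x => exp (g x)) ν) : Integrable g μ := by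
  have hgν : AEStronglyMeasurable g ν := by
    simpa using hexp.aestronglyMeasurable.aemeasurable.log.aestronglyMeasurable
  have hdom : Integrable (fun x => klFun (μ.rnDeriv ν x).toReal + exp (g x) - 1) ν :=
    (((integrable_klFun_rnDeriv_iff hμν).mpr h_int).add hexp).sub (integrable_const 1)
  refine (integrable_rnDeriv_smul_iff hμν).mp (hdom.mono' ?_ (ae_of_all _ fun x => ?_))
  · exact (Measure.measurable_rnDeriv μ ν).ennreal_toReal.aestronglyMeasurable.smul hgν
  · rw [smul_eq_mul, norm_mul, Real.norm_of_nonneg ENNReal.toReal_nonneg,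
      Real.norm_of_nonneg (hg x)]
    exact mul_le_klFun_add_exp_sub_one ENNReal.toReal_nonneg (g x)

lemma integral_le_integral_llr_add_log_integral_exp [IsProbabilityMeasure μ]
    [IsProbabilityMeasure ν] (hμν : μ ≪ ν) (h_int : Integrable (llr μ ν) μ)
    (hgμ : Integrable g μ) (hexp : Integrable (fun x => exp (g x)) ν) :
    ∫ x, g x ∂μ ≤ ∫ x, llr μ ν x ∂μ + log (∫ x, exp (g x) ∂ν) := by
  have := isProbabilityMeasure_tilted hexp
  have hgibbs := integral_llr_add_sub_measure_univ_nonneg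
    (hμν.trans (absolutelyContinuous_tilted hexp))
    (integrable_llr_tilted_right hμν hgμ h_int hexp)
  rw [integral_llr_tilted_right hμν hgμ hexp h_int] at hgibbs
  simp only [probReal_univ] at hgibbs
  linarith

lemma integral_llr_nonneg [IsProbabilityMeasure μ] [IsProbabilityMeasure ν] (hμν : μ ≪ ν)
    (h_int : Integrable (llr μ ν) μ) : 0 ≤ ∫ x, llr μ ν x ∂μ := by
  simpa using integral_llr_add_sub_measure_univ_nonneg hμν h_int

end MeasureTheory

/-- eq. (menoL1) in the proof of Theorem "stab:piani":
if `𝔭 ≪ 𝔮` are probability measures with finite relative entropy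
`H = ∫ log (d𝔭/d𝔮) d𝔭`, and `u` is a positive measurable function with
`u⁻¹ ∈ L^s(𝔮)` for some `s > 0`, then the negative part `(log u)⁻ = max(-log u, 0)`
belongs to `L¹(𝔭)` and
`∫ (log u)⁻ d𝔭 ≤ 2 e^{H-1} max(1/s, log₂(1 + (1 + ‖u⁻¹‖_s^s)^{1/s}))`. -/
theorem log_neg_part_integrable
    {Ω : Type*} [MeasurableSpace Ω]
    (𝔭 𝔮 : Measure Ω) [IsProbabilityMeasure 𝔭] [IsProbabilityMeasure 𝔮]
    (hac : 𝔭 ≪ 𝔮)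
    (hH : Integrable (fun x => Real.log ((𝔭.rnDeriv 𝔮 x).toReal)) 𝔭)
    (u : Ω → ℝ) (humeas : Measurable u) (hupos : ∀ x, 0 < u x)
    (s : ℝ) (hs : 0 < s)
    (hus : Integrable (fun x => u x ^ (-s)) 𝔮) :
    Integrable (fun x => max (-Real.log (u x)) 0) 𝔭 ∧
    ∫ x, max (-Real.log (u x)) 0 ∂𝔭 ≤
      2 * Real.exp ((∫ x, Real.log ((𝔭.rnDeriv 𝔮 x).toReal) ∂𝔭) - 1) *
        max (1 / s)
          (Real.logb 2 (1 + (1 + ∫ x, u x ^ (-s) ∂𝔮) ^ (1 / s))) := by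
  change Integrable (llr 𝔭 𝔮) 𝔭 at hH
  set f := fun x => max (-Real.log (u x)) 0
  have hexp_le (x : Ω) : exp (s * f x) ≤ 1 + u x ^ (-s) :=
    exp_mul_max_neg_log_le_one_add_rpow_neg (hupos x) s
  have hexp : Integrable (fun x => exp (s * f x)) 𝔮 :=
    ((integrable_const 1).add hus).mono' (by fun_prop)
      (ae_of_all _ fun x => (Real.norm_of_nonneg (exp_pos _).le).trans_le (hexp_le x))
  have hsf : Integrable (fun x => s * f x) 𝔭 :=
    integrable_of_integrable_exp_of_nonneg hac hH
      (fun x => mul_nonneg hs.le (le_max_right _ _)) hexp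
  have hf : Integrable f 𝔭 := by simpa [hs.ne'] using hsf.const_mul s⁻¹
  have hexp_int : ∫ x, exp (s * f x) ∂𝔮 ≤ 1 + ∫ x, u x ^ (-s) ∂𝔮 := by
    simpa [integral_add (integrable_const 1) hus] using
      integral_mono hexp ((integrable_const 1).add hus) hexp_le
  have hDV : s * ∫ x, f x ∂𝔭 ≤ ∫ x, llr 𝔭 𝔮 x ∂𝔭 + log (1 + ∫ x, u x ^ (-s) ∂𝔮) := by
    rw [← integral_const_mul]
    exact (integral_le_integral_llr_add_log_integral_exp hac hH hsf hexp).trans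
      (by gcongr; exact integral_exp_pos hexp)
  refine ⟨hf, ((le_div_iff₀' hs).mpr hDV).trans ?_⟩
  exact div_add_log_le_two_mul_exp_mul_max (integral_llr_nonneg hac hH) hs
    (by linarith [integral_exp_pos hexp])
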